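/- arXiv:1403.5648 — 6 statements merged into one kernel-verified Lean document; each statement's English description precedes it below -/
import Mathlib

section
/- The function f(β) = √((1-β)P_p)·|h_p| + √(P_{s0} + β·η·P_p)·‖h_sp‖ on [0,1] attains its maximum at β* = clamp((P_p·η²·‖h_sp‖² − P_{s0}·|h_p|²)/(P_p·η²·‖h_sp‖² + η·P_p·|h_p|²), 0, 1). -/
/-!
Put `u = √((1 - β) Pp)` and `v = √(Ps0 + β η Pp)`. Then `η u² + v² = η Pp + Ps0` does not
depend on `β`, so we are maximizing the linear form `hp u + hsp v` over an arc of an ellipse.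
Since the ellipse lies below its tangent line at `(U, V)`,
`V (hp u + hsp v - hp U - hsp V) ≤ (u - U) (hp V - η hsp U)`, where `(U, V)` belongs to `β₀`;
moreover `(hp V)² - (η hsp U)² = D β₀ - N` for the denominator `D` and numerator `N` of the
claimed maximizer `β₀`. The clamped quotient `β₀` satisfies the variational
inequality `(β - β₀) (D β₀ - N) ≥ 0` on `[0, 1]`, which makes that product nonpositive.
-/

open Set

lemma mul_add_mul_le_of_sub_mul_nonpos {a b η u v U V : ℝ} (hb : 0 ≤ b) (hη : 0 ≤ η)
    (hV : 0 < V) (hK : η * u ^ 2 + v ^ 2 = η * U ^ 2 + V ^ 2)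
    (hsign : (u - U) * (a * V - η * b * U) ≤ 0) :
    u * a + v * b ≤ U * a + V * b := by
  -- AM-GM on both coordinates: the ellipse lies below its tangent line at `(U, V)`.
  have htangent : η * U * u + V * v ≤ η * U ^ 2 + V ^ 2 := by
    nlinarith [mul_nonneg hη (sq_nonneg (u - U)), sq_nonneg (v - V)]
  have hscaled : V * (u * a + v * b) ≤ V * (U * a + V * b) := by
    nlinarith [mul_le_mul_of_nonneg_left htangent hb]
  exact le_of_mul_le_mul_left hscaled hV

lemma sub_mul_sub_nonpos_of_sq_sub_mul_sq_sub_nonpos {x y a b : ℝ} (hx : 0 ≤ x) (hy : 0 ≤ y)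
    (ha : 0 ≤ a) (hb : 0 ≤ b) (h : (x ^ 2 - y ^ 2) * (a ^ 2 - b ^ 2) ≤ 0) :
    (x - y) * (a - b) ≤ 0 := by
  have hfactor : (x ^ 2 - y ^ 2) * (a ^ 2 - b ^ 2) = (x - y) * (a - b) * ((x + y) * (a + b)) := by
    ring
  rcases (add_nonneg hx hy).eq_or_lt with hxy | hxy
  · nlinarith
  rcases (add_nonneg ha hb).eq_or_lt with hab | hab
  · nlinarith
  rw [hfactor] at h
  exact nonpos_of_mul_nonpos_left h (mul_pos hxy hab)

lemma sub_mul_sub_clamp_nonneg {N D β : ℝ} (hD : 0 < D) (hβ : β ∈ Icc (0 : ℝ) 1) :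
    0 ≤ (β - min 1 (max 0 (N / D))) * (D * min 1 (max 0 (N / D)) - N) := by
  obtain ⟨hβ0, hβ1⟩ := hβ
  rcases le_total (N / D) 0 with hneg | hpos
  · have hN : N ≤ 0 := by simpa using (div_le_iff₀ hD).1 hneg
    rw [max_eq_left hneg, min_eq_right zero_le_one]
    nlinarith
  rcases le_total (N / D) 1 with hle | hgt
  · rw [max_eq_right hpos, min_eq_right hle, mul_div_cancel₀ N hD.ne']
    simp
  · have hN : D ≤ N := by rwa [one_le_div hD] at hgt
    rw [max_eq_right hpos, min_eq_left hgt]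
    nlinarith

lemma isMaxOn_amplitude_of_variational {Pp Ps0 η hp hsp β₀ : ℝ}
    (hPp : 0 < Pp) (hPs0 : 0 < Ps0) (hη : 0 < η) (hhp : 0 ≤ hp) (hhsp : 0 ≤ hsp)
    (hβ₀ : β₀ ∈ Icc (0 : ℝ) 1)
    (hvar : ∀ β ∈ Icc (0 : ℝ) 1, 0 ≤ (β - β₀) *
      ((Pp * η ^ 2 * hsp ^ 2 + η * Pp * hp ^ 2) * β₀ - (Pp * η ^ 2 * hsp ^ 2 - Ps0 * hp ^ 2))) :
    IsMaxOn
      (fun β : ℝ => Real.sqrt ((1 - β) * Pp) * hp + Real.sqrt (Ps0 + β * η * Pp) * hsp)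
      (Icc 0 1) β₀ := by
  have hsq : ∀ β ∈ Icc (0 : ℝ) 1,
      Real.sqrt ((1 - β) * Pp) ^ 2 = (1 - β) * Pp ∧
        Real.sqrt (Ps0 + β * η * Pp) ^ 2 = Ps0 + β * η * Pp := fun β hβ =>
    ⟨Real.sq_sqrt (mul_nonneg (by linarith [hβ.2]) hPp.le),
      Real.sq_sqrt (by have := hβ.1; positivity)⟩
  intro β hβ
  obtain ⟨hu, hv⟩ := hsq β hβ
  obtain ⟨hU, hV⟩ := hsq β₀ hβ₀
  refine mul_add_mul_le_of_sub_mul_nonpos hhsp hη.le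
    (Real.sqrt_pos.2 (by have := hβ₀.1; positivity)) (by rw [hu, hv, hU, hV]; ring) ?_
  refine sub_mul_sub_nonpos_of_sq_sub_mul_sq_sub_nonpos (Real.sqrt_nonneg _) (Real.sqrt_nonneg _)
    (by positivity) (by positivity) ?_
  rw [mul_pow, mul_pow, hu, hU, hV, mul_pow]
  nlinarith [hvar β hβ]

theorem stmt_0 (Pp Ps0 η hp hsp : ℝ)
    (hPp : 0 < Pp) (hPs0 : 0 < Ps0) (hη : 0 < η)
    (hhp : 0 ≤ hp) (hhsp : 0 ≤ hsp) :
    IsMaxOn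
      (fun β : ℝ => Real.sqrt ((1 - β) * Pp) * hp + Real.sqrt (Ps0 + β * η * Pp) * hsp)
      (Set.Icc 0 1)
      (min 1 (max 0 ((Pp * η ^ 2 * hsp ^ 2 - Ps0 * hp ^ 2) /
        (Pp * η ^ 2 * hsp ^ 2 + η * Pp * hp ^ 2)))) := by
  refine isMaxOn_amplitude_of_variational hPp hPs0 hη hhp hhsp
    ⟨le_min zero_le_one (le_max_left _ _), min_le_left _ _⟩ fun β hβ => ?_
  have hsp_term : 0 ≤ Pp * η ^ 2 * hsp ^ 2 := by positivity
  have hp_term : 0 ≤ η * Pp * hp ^ 2 := by positivity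
  rcases (add_nonneg hsp_term hp_term).eq_or_lt with hD | hD
  · have hsp0 : hsp = 0 := by
      simpa [hPp.ne', hη.ne'] using (show Pp * η ^ 2 * hsp ^ 2 = 0 by linarith)
    have hp0 : hp = 0 := by
      simpa [hPp.ne', hη.ne'] using (show η * Pp * hp ^ 2 = 0 by linarith)
    simp [hsp0, hp0]
  · exact sub_mul_sub_clamp_nonneg hD hβ
end

section
/- If P_p·η²·‖h_sp‖² < P_{s0}·|h_p|², then the maximum of f(β) = √((1-β)P_p)·|h_p| + √(P_{s0} + β·η·P_p)·‖h_sp‖ over β ∈ [0,1] is attained at β = 0, with value √(P_p)·|h_p| + √(P_{s0})·‖h_sp‖. -/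
/-!
Concavity of `√` puts it below its tangent lines. Bounding both square roots by their tangents
at `β = 0` majorizes `f` on `[0, 1]` by `f 0 + β P_p (η ‖h_sp‖ / (2 √P_{s0}) - |h_p| / (2 √P_p))`,
and the hypothesis says exactly that this slope is negative.
-/

namespace Real

theorem sqrt_le_sqrt_add_sub_div_two_mul_sqrt {x y : ℝ} (hx : 0 < x) (hy : 0 ≤ y) :
    √y ≤ √x + (y - x) / (2 * √x) := by
  rw [← sub_nonneg, show √x + (y - x) / (2 * √x) - √y = (√y - √x) ^ 2 / (2 * √x) by
    field_simp
    linear_combination sq_sqrt hx.le - sq_sqrt hy]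
  positivity

end Real

theorem stmt_1 (Pp Ps0 η hp hsp : ℝ)
    (hPp : 0 < Pp) (hPs0 : 0 < Ps0) (hη : 0 < η)
    (hhp : 0 < hp) (hhsp : 0 < hsp)
    (hcond : Pp * η ^ 2 * hsp ^ 2 < Ps0 * hp ^ 2) :
    IsMaxOn
      (fun β : ℝ => Real.sqrt ((1 - β) * Pp) * hp + Real.sqrt (Ps0 + β * η * Pp) * hsp)
      (Set.Icc 0 1) 0 ∧
    Real.sqrt ((1 - 0) * Pp) * hp + Real.sqrt (Ps0 + 0 * η * Pp) * hsp
      = Real.sqrt Pp * hp + Real.sqrt Ps0 * hsp := by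
  refine ⟨fun β ⟨hβ0, hβ1⟩ => ?_, by norm_num⟩
  have hgain : η * √Pp * hsp ≤ √Ps0 * hp := by
    refine (pow_le_pow_iff_left₀ (by positivity) (by positivity) two_ne_zero).mp ?_
    rw [mul_pow, mul_pow, mul_pow, Real.sq_sqrt hPp.le, Real.sq_sqrt hPs0.le]
    linarith
  have hslope : η * hsp / (2 * √Ps0) ≤ hp / (2 * √Pp) := by
    rw [div_le_div_iff₀ (by positivity) (by positivity)]
    linear_combination 2 * hgain
  have hp_tangent := Real.sqrt_le_sqrt_add_sub_div_two_mul_sqrt hPp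
    (mul_nonneg (sub_nonneg.2 hβ1) hPp.le)
  have hs_tangent := Real.sqrt_le_sqrt_add_sub_div_two_mul_sqrt hPs0
    (show 0 ≤ Ps0 + β * η * Pp by positivity)
  simp only [Set.mem_ofPred_eq, sub_zero, one_mul, zero_mul, add_zero]
  calc √((1 - β) * Pp) * hp + √(Ps0 + β * η * Pp) * hsp
      ≤ (√Pp + ((1 - β) * Pp - Pp) / (2 * √Pp)) * hp
        + (√Ps0 + (Ps0 + β * η * Pp - Ps0) / (2 * √Ps0)) * hsp := by gcongr
    _ = √Pp * hp + √Ps0 * hsp + β * Pp * (η * hsp / (2 * √Ps0) - hp / (2 * √Pp)) := by ring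
    _ ≤ √Pp * hp + √Ps0 * hsp :=
      add_le_of_nonpos_right (mul_nonpos_of_nonneg_of_nonpos (by positivity) (sub_nonpos.2 hslope))
end

section
/- If P_p·η²·‖h_sp‖² ≥ P_{s0}·|h_p|² and |h_p| > 0, then the maximum of f(β)² where f(β) = √((1-β)P_p)·|h_p| + √(P_{s0} + β·η·P_p)·‖h_sp‖ over β ∈ [0,1] equals ((P_p·η + P_{s0})/(η²·‖h_sp‖² + η·|h_p|²))·(|h_p|² + η·‖h_sp‖²)², attained at the interior critical point β̄ = (P_p·η²·‖h_sp‖² − P_{s0}·|h_p|²)/(P_p·η²·‖h_sp‖² + η·P_p·|h_p|²), provided β̄ ≤ 1. -/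
/-!
Write `a = √((1-β)Pp)` and `b = √(Ps0 + βηPp)`. Then `η a² + b² = ηPp + Ps0` does not depend on `β`,
so Cauchy–Schwarz for the vectors `(√η a, b)` and `(hp, √η hsp)` bounds `η f(β)²` by
`(ηPp + Ps0)(hp² + η hsp²)` uniformly in `β`. The critical point `β̄` is exactly the split for which
these two vectors are parallel, i.e. `(a, b) = √K (hp, η hsp)` with
`K = (Pp η + Ps0) / (η² hsp² + η hp²)`, so the bound is attained there.
-/

open Real

theorem weighted_cauchy_schwarz (η a b x y : ℝ) :
    η * (a * x + b * y) ^ 2 ≤ (η * a ^ 2 + b ^ 2) * (x ^ 2 + η * y ^ 2) := by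
  nlinarith [sq_nonneg (η * a * y - b * x)]

theorem sqrt_mul_add_sqrt_mul_sq_of_parallel {K c x y : ℝ} (hK : 0 ≤ K) (hc : 0 ≤ c)
    (hx : 0 ≤ x) (hy : 0 ≤ y) :
    (√(K * x ^ 2) * x + √(K * (c * y) ^ 2) * y) ^ 2 = K * (x ^ 2 + c * y ^ 2) ^ 2 := by
  rw [sqrt_mul hK, sqrt_mul hK, sqrt_sq hx, sqrt_sq (mul_nonneg hc hy)]
  linear_combination (x ^ 2 + c * y ^ 2) ^ 2 * sq_sqrt hK

section PowerSplit

variable {Pp Ps0 η hp hsp : ℝ}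

theorem mul_received_power_le (hPp : 0 ≤ Pp) (hPs0 : 0 ≤ Ps0) (hη : 0 ≤ η)
    {β : ℝ} (hβ : β ∈ Set.Icc (0 : ℝ) 1) :
    η * (√((1 - β) * Pp) * hp + √(Ps0 + β * η * Pp) * hsp) ^ 2
      ≤ (η * Pp + Ps0) * (hp ^ 2 + η * hsp ^ 2) := by
  obtain ⟨hβ0, hβ1⟩ := hβ
  have ha : √((1 - β) * Pp) ^ 2 = (1 - β) * Pp :=
    sq_sqrt (mul_nonneg (by linarith) hPp)
  have hb : √(Ps0 + β * η * Pp) ^ 2 = Ps0 + β * η * Pp := sq_sqrt (by positivity)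
  calc η * (√((1 - β) * Pp) * hp + √(Ps0 + β * η * Pp) * hsp) ^ 2
      ≤ (η * √((1 - β) * Pp) ^ 2 + √(Ps0 + β * η * Pp) ^ 2) * (hp ^ 2 + η * hsp ^ 2) :=
        weighted_cauchy_schwarz _ _ _ _ _
    _ = (η * Pp + Ps0) * (hp ^ 2 + η * hsp ^ 2) := by rw [ha, hb]; ring

theorem received_power_at_critical_point (hPp : 0 < Pp) (hPs0 : 0 ≤ Ps0) (hη : 0 < η)
    (hhp : 0 < hp) (hhsp : 0 ≤ hsp) :
    let β := (Pp * η ^ 2 * hsp ^ 2 - Ps0 * hp ^ 2) / (Pp * η ^ 2 * hsp ^ 2 + η * Pp * hp ^ 2)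
    (√((1 - β) * Pp) * hp + √(Ps0 + β * η * Pp) * hsp) ^ 2
      = (Pp * η + Ps0) / (η ^ 2 * hsp ^ 2 + η * hp ^ 2) * (hp ^ 2 + η * hsp ^ 2) ^ 2 := by
  intro β
  set K := (Pp * η + Ps0) / (η ^ 2 * hsp ^ 2 + η * hp ^ 2)
  have hden : 0 < η ^ 2 * hsp ^ 2 + η * hp ^ 2 := by positivity
  have hden' : 0 < Pp * η ^ 2 * hsp ^ 2 + η * Pp * hp ^ 2 := by positivity
  have h1 : (1 - β) * Pp = K * hp ^ 2 := by
    simp only [β, K]; field_simp; ring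
  have h2 : Ps0 + β * η * Pp = K * (η * hsp) ^ 2 := by
    simp only [β, K]; field_simp; ring
  rw [h1, h2]
  exact sqrt_mul_add_sqrt_mul_sq_of_parallel (by positivity) hη.le hhp.le hhsp

end PowerSplit

theorem stmt_2_general (Pp Ps0 η hp hsp : ℝ)
    (hPp : 0 < Pp) (hPs0 : 0 < Ps0) (hη : 0 < η)
    (hhp : 0 < hp) (hhsp : 0 < hsp) :
    IsMaxOn
      (fun β : ℝ => (Real.sqrt ((1 - β) * Pp) * hp + Real.sqrt (Ps0 + β * η * Pp) * hsp) ^ 2)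
      (Set.Icc 0 1)
      ((Pp * η ^ 2 * hsp ^ 2 - Ps0 * hp ^ 2) / (Pp * η ^ 2 * hsp ^ 2 + η * Pp * hp ^ 2)) ∧
    (let β := (Pp * η ^ 2 * hsp ^ 2 - Ps0 * hp ^ 2) /
        (Pp * η ^ 2 * hsp ^ 2 + η * Pp * hp ^ 2);
      (Real.sqrt ((1 - β) * Pp) * hp + Real.sqrt (Ps0 + β * η * Pp) * hsp) ^ 2
        = (Pp * η + Ps0) / (η ^ 2 * hsp ^ 2 + η * hp ^ 2) * (hp ^ 2 + η * hsp ^ 2) ^ 2) := by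
  have hvalue := received_power_at_critical_point hPp hPs0.le hη hhp hhsp.le
  refine ⟨fun β hβ => ?_, hvalue⟩
  have hbound := mul_received_power_le (hp := hp) (hsp := hsp) hPp.le hPs0.le hη.le hβ
  have hden : 0 < η ^ 2 * hsp ^ 2 + η * hp ^ 2 := by positivity
  have hvalue_mul : η * ((Pp * η + Ps0) / (η ^ 2 * hsp ^ 2 + η * hp ^ 2) *
      (hp ^ 2 + η * hsp ^ 2) ^ 2) = (η * Pp + Ps0) * (hp ^ 2 + η * hsp ^ 2) := by
    field_simp; ring
  simp only [Set.mem_ofPred_eq]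
  rw [hvalue]
  exact le_of_mul_le_mul_left (hvalue_mul ▸ hbound) hη

theorem stmt_2 (Pp Ps0 η hp hsp : ℝ)
    (hPp : 0 < Pp) (hPs0 : 0 < Ps0) (hη : 0 < η)
    (hhp : 0 < hp) (hhsp : 0 < hsp)
    (hcond : Ps0 * hp ^ 2 ≤ Pp * η ^ 2 * hsp ^ 2)
    (hβle : (Pp * η ^ 2 * hsp ^ 2 - Ps0 * hp ^ 2) /
        (Pp * η ^ 2 * hsp ^ 2 + η * Pp * hp ^ 2) ≤ 1) :
    IsMaxOn
      (fun β : ℝ => (Real.sqrt ((1 - β) * Pp) * hp + Real.sqrt (Ps0 + β * η * Pp) * hsp) ^ 2)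
      (Set.Icc 0 1)
      ((Pp * η ^ 2 * hsp ^ 2 - Ps0 * hp ^ 2) / (Pp * η ^ 2 * hsp ^ 2 + η * Pp * hp ^ 2)) ∧
    (let β := (Pp * η ^ 2 * hsp ^ 2 - Ps0 * hp ^ 2) /
        (Pp * η ^ 2 * hsp ^ 2 + η * Pp * hp ^ 2);
      (Real.sqrt ((1 - β) * Pp) * hp + Real.sqrt (Ps0 + β * η * Pp) * hsp) ^ 2
        = (Pp * η + Ps0) / (η ^ 2 * hsp ^ 2 + η * hp ^ 2) * (hp ^ 2 + η * hsp ^ 2) ^ 2) :=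
  stmt_2_general Pp Ps0 η hp hsp hPp hPs0 hη hhp hhsp
end

section
/- For the zero-forcing ideal cooperation scheme, the function g(β) = P_{s0} + β·P_p·(η + |h_p|²/‖h_sp‖²) − [(γ·N + P_p·|h_p|² − 2·√(γ·N)·√((1-β)·P_p)·|h_p|)/‖h_sp‖²] on [0,1] is maximized at β* = clamp(1 − γ·N / (P_p·(|h_p| + η·‖h_sp‖²/|h_p|)²), 0, 1), where γ = 2^{r_p} − 1. -/
/-!
Substituting `s = √(1 - β)` turns the objective into `K + a (1 - s²) + b s` with
`a = P_p (η + |h_p|²/‖h_sp‖²)` and `b = 2 √(γN) √P_p |h_p| / ‖h_sp‖²`, a concave quadratic in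
`s ∈ [0, 1]`. Its maximiser is `min 1 (b / 2a)`, and `(b / 2a)²` simplifies to
`γN / (P_p (|h_p| + η ‖h_sp‖²/|h_p|)²)`.
-/

open Set

lemma neg_mul_sq_add_mul_le_min_one {a b s : ℝ} (ha : 0 < a) (hs : s ∈ Icc 0 1) :
    -a * s ^ 2 + b * s ≤ -a * min 1 (b / (2 * a)) ^ 2 + b * min 1 (b / (2 * a)) := by
  obtain ⟨hs0, hs1⟩ := hs
  rcases le_total (b / (2 * a)) 1 with hb | hb
  · rw [min_eq_right hb]
    have hb' : b = 2 * a * (b / (2 * a)) := by field_simp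
    nlinarith [mul_nonneg ha.le (sq_nonneg (s - b / (2 * a)))]
  · rw [min_eq_left hb]
    have h2a : 2 * a ≤ b := by rwa [le_div_iff₀ (by positivity), one_mul] at hb
    have hfactor : 0 ≤ b - a * (1 + s) := by nlinarith
    nlinarith [mul_nonneg (sub_nonneg.2 hs1) hfactor]

lemma min_one_max_zero_one_sub_sq {t : ℝ} (ht : 0 ≤ t) :
    min 1 (max 0 (1 - t ^ 2)) = 1 - min 1 t ^ 2 := by
  rcases le_total t 1 with h | h
  · rw [min_eq_right h, max_eq_right (by nlinarith), min_eq_right (by nlinarith)]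
  · rw [min_eq_left h, max_eq_left (by nlinarith), min_eq_right zero_le_one]
    norm_num

theorem isMaxOn_mul_add_mul_sqrt_one_sub {a b : ℝ} (ha : 0 < a) (hb : 0 ≤ b) :
    IsMaxOn (fun β => a * β + b * √(1 - β)) (Icc 0 1)
      (min 1 (max 0 (1 - (b / (2 * a)) ^ 2))) := by
  set t := min 1 (b / (2 * a))
  have ht0 : 0 ≤ t := le_min zero_le_one (by positivity)
  rw [min_one_max_zero_one_sub_sq (by positivity : 0 ≤ b / (2 * a))]
  intro β ⟨hβ0, hβ1⟩
  have hsq : √(1 - β) ^ 2 = 1 - β := Real.sq_sqrt (by linarith)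
  have hs : √(1 - β) ∈ Icc 0 1 := ⟨Real.sqrt_nonneg _, Real.sqrt_le_one.2 (by linarith)⟩
  have hmax : -a * √(1 - β) ^ 2 + b * √(1 - β) ≤ -a * t ^ 2 + b * t :=
    neg_mul_sq_add_mul_le_min_one ha hs
  rw [hsq] at hmax
  show a * β + b * √(1 - β) ≤ a * (1 - t ^ 2) + b * √(1 - (1 - t ^ 2))
  rw [sub_sub_cancel, Real.sqrt_sq ht0]
  linarith

theorem stmt_3_general (Pp Ps0 η N rp hp hsp : ℝ)
    (hPp : 0 < Pp) (hη : 0 < η) (hN : 0 < N) (hrp : 0 < rp)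
    (hhp : 0 < hp) (hhsp : 0 < hsp) :
    let γ : ℝ := (2 : ℝ) ^ rp - 1
    IsMaxOn
      (fun β : ℝ => Ps0 + β * Pp * (η + hp ^ 2 / hsp ^ 2) -
        (γ * N + Pp * hp ^ 2 - 2 * Real.sqrt (γ * N) * Real.sqrt ((1 - β) * Pp) * hp) / hsp ^ 2)
      (Set.Icc 0 1)
      (min 1 (max 0 (1 - γ * N / (Pp * (hp + η * hsp ^ 2 / hp) ^ 2)))) := by
  intro γ
  have hγN : 0 < γ * N := mul_pos (sub_pos.2 (Real.one_lt_rpow one_lt_two hrp)) hN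
  set a := Pp * (η + hp ^ 2 / hsp ^ 2)
  set b := 2 * √(γ * N) * √Pp * hp / hsp ^ 2
  have hratio : (b / (2 * a)) ^ 2 = γ * N / (Pp * (hp + η * hsp ^ 2 / hp) ^ 2) := by
    simp only [a, b, div_pow, mul_pow, Real.sq_sqrt hγN.le, Real.sq_sqrt hPp.le]
    field_simp
    ring
  have hobj : (fun β : ℝ => Ps0 + β * Pp * (η + hp ^ 2 / hsp ^ 2) -
      (γ * N + Pp * hp ^ 2 - 2 * √(γ * N) * √((1 - β) * Pp) * hp) / hsp ^ 2) =
      fun β => (Ps0 - (γ * N + Pp * hp ^ 2) / hsp ^ 2) + (a * β + b * √(1 - β)) := by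
    funext β
    rw [Real.sqrt_mul' _ hPp.le]
    simp only [a, b]
    field_simp
    ring
  rw [hobj, ← hratio]
  exact (isMaxOn_const).add (isMaxOn_mul_add_mul_sqrt_one_sub (by positivity) (by positivity))

theorem stmt_3 (Pp Ps0 η N rp hp hsp : ℝ)
    (hPp : 0 < Pp) (hPs0 : 0 < Ps0) (hη : 0 < η) (hN : 0 < N) (hrp : 0 < rp)
    (hhp : 0 < hp) (hhsp : 0 < hsp) :
    let γ : ℝ := (2 : ℝ) ^ rp - 1
    IsMaxOn
      (fun β : ℝ => Ps0 + β * Pp * (η + hp ^ 2 / hsp ^ 2) -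
        (γ * N + Pp * hp ^ 2 - 2 * Real.sqrt (γ * N) * Real.sqrt ((1 - β) * Pp) * hp) / hsp ^ 2)
      (Set.Icc 0 1)
      (min 1 (max 0 (1 - γ * N / (Pp * (hp + η * hsp ^ 2 / hp) ^ 2)))) :=
  stmt_3_general Pp Ps0 η N rp hp hsp hPp hη hN hrp hhp hhsp
end

section
/- Let h_sp, h_s ∈ ℂᴺ be nonzero with Π = h_sp h_sp†/‖h_sp‖², and let q_s > 0, 0 ≤ λ ≤ 1. Assume Πh_s ≠ 0 and (I−Π)h_s ≠ 0. Then the vector w_s = √q_s·(√λ·Πh_s/‖Πh_s‖ + √(1−λ)·(I−Π)h_s/‖(I−Π)h_s‖) satisfies ‖w_s‖² = q_s, |h_sp†·w_s|² = λ·q_s·‖h_sp‖², and |h_s†·w_s| = √q_s·(√λ·‖Πh_s‖ + √(1−λ)·‖(I−Π)h_s‖). -/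
/-!
The vector `Π h_s` lies on the line `ℂ ∙ h_sp` and `(I - Π) h_s` is orthogonal to it, so the two
normalized summands of `w_s` form an orthonormal pair. Pythagoras gives `‖w_s‖² = q_s (λ + (1 - λ))`;
only the first summand sees `h_sp`, against which it is parallel, giving `|h_sp† w_s| = √(λ q_s) ‖h_sp‖`;
and since `h_s = Π h_s + (I - Π) h_s`, each summand contributes the real number `√λ ‖Π h_s‖`,
resp. `√(1-λ) ‖(I - Π) h_s‖`, to `h_s† w_s`.
-/

open Submodule

variable {𝕜 E : Type*} [RCLike 𝕜] [NormedAddCommGroup E] [InnerProductSpace 𝕜 E]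
  [NormedSpace ℝ E] [IsScalarTower ℝ 𝕜 E]

local notation "⟪" x ", " y "⟫" => inner 𝕜 x y

noncomputable def normalizedCombination (s t : ℝ) (u v : E) : E :=
  (s / ‖u‖) • u + (t / ‖v‖) • v

omit [IsScalarTower ℝ 𝕜 E] in
lemma norm_div_norm_smul_self {u : E} (hu : u ≠ 0) (s : ℝ) : ‖(s / ‖u‖) • u‖ = |s| := by
  rw [norm_smul, Real.norm_eq_abs, abs_div, abs_norm, div_mul_cancel₀ _ (norm_ne_zero_iff.mpr hu)]

lemma norm_normalizedCombination_sq {u v : E} (huv : ⟪u, v⟫ = 0) (hu : u ≠ 0) (hv : v ≠ 0)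
    (s t : ℝ) : ‖normalizedCombination s t u v‖ ^ 2 = s ^ 2 + t ^ 2 := by
  have horth : ⟪(s / ‖u‖) • u, (t / ‖v‖) • v⟫ = 0 := by
    rw [inner_smul_left_eq_smul, inner_smul_right_eq_smul, huv, smul_zero, smul_zero]
  rw [normalizedCombination, @norm_add_sq 𝕜, horth, map_zero, mul_zero, add_zero,
    norm_div_norm_smul_self hu, norm_div_norm_smul_self hv, sq_abs, sq_abs]

omit [NormedSpace ℝ E] [IsScalarTower ℝ 𝕜 E] in
lemma inner_div_norm_smul_self (x : E) (r : ℝ) :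
    ⟪x, ((r / ‖x‖ : ℝ) : 𝕜) • x⟫ = ((r * ‖x‖ : ℝ) : 𝕜) := by
  rcases eq_or_ne x 0 with rfl | hx
  · simp
  rw [inner_smul_right, inner_self_eq_norm_sq_to_K, ← RCLike.ofReal_pow, ← RCLike.ofReal_mul]
  field_simp [norm_ne_zero_iff.mpr hx]

lemma inner_add_normalizedCombination {u v : E} (huv : ⟪u, v⟫ = 0) (s t : ℝ) :
    ⟪u + v, normalizedCombination s t u v⟫ = ((s * ‖u‖ + t * ‖v‖ : ℝ) : 𝕜) := by
  have hvu : ⟪v, u⟫ = 0 := by rw [← inner_conj_symm, huv, map_zero]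
  rw [normalizedCombination, RCLike.real_smul_eq_coe_smul (K := 𝕜) (s / ‖u‖),
    RCLike.real_smul_eq_coe_smul (K := 𝕜) (t / ‖v‖), inner_add_left, inner_add_right,
    inner_add_right, inner_div_norm_smul_self, inner_div_norm_smul_self, inner_smul_right,
    inner_smul_right, huv, hvu]
  push_cast
  ring

lemma inner_normalizedCombination_of_inner_eq_zero {x u v : E} (hxv : ⟪x, v⟫ = 0) (s t : ℝ) :
    ⟪x, normalizedCombination s t u v⟫ = (s / ‖u‖) • ⟪x, u⟫ := by
  rw [normalizedCombination, inner_add_right, inner_smul_right_eq_smul, inner_smul_right_eq_smul,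
    hxv, smul_zero, add_zero]

lemma norm_inner_normalizedCombination_of_mem_span {x u v : E} (hxv : ⟪x, v⟫ = 0)
    (hux : u ∈ 𝕜 ∙ x) (hu : u ≠ 0) {s : ℝ} (hs : 0 ≤ s) (t : ℝ) :
    ‖⟪x, normalizedCombination s t u v⟫‖ = s * ‖x‖ := by
  obtain ⟨c, rfl⟩ := mem_span_singleton.mp hux
  have hc : ‖c‖ ≠ 0 := norm_ne_zero_iff.mpr (left_ne_zero_of_smul hu)
  have hx : ‖x‖ ≠ 0 := norm_ne_zero_iff.mpr (right_ne_zero_of_smul hu)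
  rw [inner_normalizedCombination_of_inner_eq_zero hxv, norm_smul, inner_smul_right,
    inner_self_eq_norm_sq_to_K, norm_mul, norm_pow, RCLike.norm_ofReal, abs_norm, norm_smul,
    Real.norm_of_nonneg (by positivity)]
  field_simp

theorem stmt_14_general (N : ℕ) (hsp hs : EuclideanSpace ℂ (Fin N))
    (qs lam : ℝ) (hqs : 0 < qs) (hlam0 : 0 ≤ lam) (hlam1 : lam ≤ 1) :
    let Phs : EuclideanSpace ℂ (Fin N) := ((inner ℂ hsp hs : ℂ) / (‖hsp‖ ^ 2 : ℝ)) • hsp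
    let Pperp : EuclideanSpace ℂ (Fin N) := hs - Phs
    Phs ≠ 0 → Pperp ≠ 0 →
    (let ws : EuclideanSpace ℂ (Fin N) :=
        (Real.sqrt qs : ℝ) • ((Real.sqrt lam / ‖Phs‖ : ℝ) • Phs +
          (Real.sqrt (1 - lam) / ‖Pperp‖ : ℝ) • Pperp);
      ‖ws‖ ^ 2 = qs ∧
      ‖(inner ℂ hsp ws : ℂ)‖ ^ 2 = lam * qs * ‖hsp‖ ^ 2 ∧
      ‖(inner ℂ hs ws : ℂ)‖ = Real.sqrt qs *
        (Real.sqrt lam * ‖Phs‖ + Real.sqrt (1 - lam) * ‖Pperp‖)) := by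
  intro Phs Pperp hP hQ ws
  have hPhs : Phs = (ℂ ∙ hsp).starProjection hs := (starProjection_singleton ℂ hs).symm
  have hPmem : Phs ∈ ℂ ∙ hsp := hPhs ▸ starProjection_apply_mem _ hs
  have hQperp : hs - Phs ∈ (ℂ ∙ hsp)ᗮ := hPhs ▸ sub_starProjection_mem_orthogonal hs
  have hPQ : inner ℂ Phs Pperp = 0 := inner_right_of_mem_orthogonal hPmem hQperp
  have hspQ : inner ℂ hsp Pperp = 0 :=
    inner_right_of_mem_orthogonal (mem_span_singleton_self hsp) hQperp
  have hws : ws = √qs • normalizedCombination √lam √(1 - lam) Phs Pperp := rfl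
  have hsplit : hs = Phs + Pperp := (add_sub_cancel Phs hs).symm
  have hsqs : |√qs| = √qs := abs_of_nonneg (Real.sqrt_nonneg qs)
  refine ⟨?_, ?_, ?_⟩
  · rw [hws, norm_smul, mul_pow, norm_normalizedCombination_sq hPQ hP hQ, Real.norm_eq_abs,
      sq_abs, Real.sq_sqrt hqs.le, Real.sq_sqrt hlam0, Real.sq_sqrt (sub_nonneg.mpr hlam1)]
    ring
  · rw [hws, inner_smul_right_eq_smul, norm_smul, Real.norm_eq_abs, hsqs,
      norm_inner_normalizedCombination_of_mem_span hspQ hPmem hP (Real.sqrt_nonneg lam)]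
    rw [mul_pow, mul_pow, Real.sq_sqrt hqs.le, Real.sq_sqrt hlam0]
    ring
  · rw [hws, inner_smul_right_eq_smul, hsplit, inner_add_normalizedCombination hPQ,
      norm_smul, Real.norm_eq_abs, hsqs, RCLike.norm_ofReal, abs_of_nonneg (by positivity)]

theorem stmt_14 (N : ℕ) (hsp hs : EuclideanSpace ℂ (Fin N))
    (hne1 : hsp ≠ 0) (hne2 : hs ≠ 0)
    (qs lam : ℝ) (hqs : 0 < qs) (hlam0 : 0 ≤ lam) (hlam1 : lam ≤ 1) :
    let Phs : EuclideanSpace ℂ (Fin N) := ((inner ℂ hsp hs : ℂ) / (‖hsp‖ ^ 2 : ℝ)) • hsp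
    let Pperp : EuclideanSpace ℂ (Fin N) := hs - Phs
    Phs ≠ 0 → Pperp ≠ 0 →
    (let ws : EuclideanSpace ℂ (Fin N) :=
        (Real.sqrt qs : ℝ) • ((Real.sqrt lam / ‖Phs‖ : ℝ) • Phs +
          (Real.sqrt (1 - lam) / ‖Pperp‖ : ℝ) • Pperp);
      ‖ws‖ ^ 2 = qs ∧
      ‖(inner ℂ hsp ws : ℂ)‖ ^ 2 = lam * qs * ‖hsp‖ ^ 2 ∧
      ‖(inner ℂ hs ws : ℂ)‖ = Real.sqrt qs *
        (Real.sqrt lam * ‖Phs‖ + Real.sqrt (1 - lam) * ‖Pperp‖)) :=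
  stmt_14_general N hsp hs qs lam hqs hlam0 hlam1
end

section
/- Let a, N₀, N_C, c, b > 0 with Ñ₀ = N₀ + N_C and define f₁(ρ) = Ñ₀·(a + N_C/ρ)/(c·(b + a·η·(1−ρ))) + (N₀ + N_C/ρ) for ρ ∈ (0, 1]. If a²η·Ñ₀/N_C = (aη)²·c (the degenerate case A₁ = 0), then the minimizer of f₁ over (0,1] is ρ* = min(C₁/B₁, 1) where B₁ = 2aηN₀ + 2(b+aη)aηc and C₁ = N₀(b+aη) + c(b+aη)². -/
/-! In the degenerate case `N0 + NC = η c NC`, and with `K = b + aη`, the function collapses to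
`f₁(ρ) = N0 + NC (η NC + K) / (ρ (K - aηρ))`. Minimising `f₁` on `(0, 1]` therefore amounts to
maximising the concave parabola `ρ (K - aηρ)` on `(-∞, 1]`, whose maximiser is its vertex
`K / (2aη) = C₁ / B₁` clamped at `1`. -/

open Set

theorem isMaxOn_mul_sub_mul_Iic {p : ℝ} (hp : 0 < p) (K r : ℝ) :
    IsMaxOn (fun x => x * (K - p * x)) (Iic r) (min (K / (2 * p)) r) := by
  rw [isMaxOn_iff]
  intro x (hx : x ≤ r)
  set v := K / (2 * p) with hv
  have hK : K = 2 * p * v := by rw [hv]; field_simp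
  rcases le_total v r with hvr | hrv
  · rw [min_eq_left hvr, hK]
    nlinarith [mul_nonneg hp.le (sq_nonneg (x - v))]
  · rw [min_eq_right hrv, hK]
    nlinarith [mul_nonneg (mul_nonneg hp.le (sub_nonneg.2 hx)) (by linarith : 0 ≤ 2 * v - r - x)]

theorem add_eq_mul_of_degenerate {a η c N0 NC : ℝ} (ha : a ≠ 0) (hη : η ≠ 0) (hNC : NC ≠ 0)
    (h : a ^ 2 * η * (N0 + NC) / NC = (a * η) ^ 2 * c) : N0 + NC = η * c * NC := by
  rw [div_eq_iff hNC] at h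
  have : a ^ 2 * η * (N0 + NC) = a ^ 2 * η * (η * c * NC) := by rw [h]; ring
  exact mul_left_cancel₀ (by positivity) this

theorem degenerate_objective_eq {a b c η N0 NC ρ : ℝ} (hc : c ≠ 0) (hρ : ρ ≠ 0)
    (hD : b + a * η * (1 - ρ) ≠ 0) (hdeg : N0 + NC = η * c * NC) :
    (N0 + NC) * (a + NC / ρ) / (c * (b + a * η * (1 - ρ))) + (N0 + NC / ρ) =
      N0 + NC * (η * NC + (b + a * η)) / (ρ * ((b + a * η) - a * η * ρ)) := by
  rw [show b + a * η = b + a * η * (1 - ρ) + a * η * ρ by ring, add_sub_cancel_right, hdeg]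
  generalize b + a * η * (1 - ρ) = D at hD ⊢
  field_simp
  ring

theorem C1_div_B1_eq {a b c η N0 : ℝ} (ha : 0 < a) (hc : 0 < c) (hη : 0 < η) (hb : 0 < b)
    (hN0 : 0 < N0) :
    (N0 * (b + a * η) + c * (b + a * η) ^ 2) / (2 * a * η * N0 + 2 * (b + a * η) * a * η * c) =
      (b + a * η) / (2 * (a * η)) := by
  have : 0 < N0 + c * (b + a * η) := by positivity
  rw [div_eq_div_iff (by positivity) (by positivity)]
  ring

theorem stmt_16 (a b c η N0 NC : ℝ)
    (ha : 0 < a) (hb : 0 < b) (hc : 0 < c) (hη : 0 < η)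
    (hN0 : 0 < N0) (hNC : 0 < NC) :
    let Ntilde : ℝ := N0 + NC
    let f1 : ℝ → ℝ := fun ρ =>
      Ntilde * (a + NC / ρ) / (c * (b + a * η * (1 - ρ))) + (N0 + NC / ρ)
    let B1 : ℝ := 2 * a * η * N0 + 2 * (b + a * η) * a * η * c
    let C1 : ℝ := N0 * (b + a * η) + c * (b + a * η) ^ 2
    a ^ 2 * η * Ntilde / NC = (a * η) ^ 2 * c →
    IsMinOn f1 (Set.Ioc 0 1) (min (C1 / B1) 1) := by
  intro Ntilde f1 B1 C1 h
  have hdeg := add_eq_mul_of_degenerate ha.ne' hη.ne' hNC.ne' h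
  have hp : 0 < a * η := by positivity
  have hf1 : ∀ ρ ∈ Ioc (0 : ℝ) 1, f1 ρ = N0 + NC * (η * NC + (b + a * η)) /
      (ρ * ((b + a * η) - a * η * ρ)) := fun ρ hρ =>
    degenerate_objective_eq hc.ne' hρ.1.ne' (by nlinarith [hρ.2]) hdeg
  have hq_pos : ∀ ρ ∈ Ioc (0 : ℝ) 1, 0 < ρ * ((b + a * η) - a * η * ρ) := fun ρ hρ =>
    mul_pos hρ.1 (by nlinarith [hρ.2])
  rw [show C1 / B1 = (b + a * η) / (2 * (a * η)) from C1_div_B1_eq ha hc hη hb hN0]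
  set ρ₀ := min ((b + a * η) / (2 * (a * η))) 1
  have hρ₀ : ρ₀ ∈ Ioc (0 : ℝ) 1 := ⟨lt_min (by positivity) one_pos, min_le_right _ _⟩
  intro ρ hρ
  show f1 ρ₀ ≤ f1 ρ
  rw [hf1 ρ hρ, hf1 ρ₀ hρ₀]
  have hnum_pos : 0 < NC * (η * NC + (b + a * η)) := by positivity
  have hq_le : ρ * ((b + a * η) - a * η * ρ) ≤ ρ₀ * ((b + a * η) - a * η * ρ₀) :=
    isMaxOn_mul_sub_mul_Iic hp _ 1 hρ.2
  gcongr N0 + ?_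
  exact div_le_div_of_nonneg_left hnum_pos.le (hq_pos ρ hρ) hq_le
end
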